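/- Combining the IPCW identities: under conditional independence of T and C given Z, independence of C and Z, positivity of G on [0,t₀], and the quantile model λ = P(t₀ − T ≤ exp(β'Z) | T ≤ t₀, Z) a.s., one has E[ Z · (1{Y ≤ t₀, Δ=1}/G(Y)) · ( λ − 1{log(t₀ − Y) ≤ β'Z} ) ] = 0, where Y = min(T,C) and Δ = 1{T ≤ C}. -/

import Mathlib

/-!
On `{Δ = 1} = {T ≤ C}` we have `Y = T`, so the integrand is `1{T ≤ C} • h(T, Z)` with
`h(t, z) = G(t)⁻¹ 1{t ≤ t₀} (λ - 1{t₀ - t ≤ exp(β·z)}) • z`. Conditional independence of `T` and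
`C` given `Z`, together with `C ⫫ Z`, makes `C` independent of the pair `(T, Z)`. Integrating out
`C` first then replaces `1{T ≤ C}` by `P(C ≥ T) = G(T)`, which cancels the weight, and leaves
`E[1{T ≤ t₀} (λ - 1{t₀ - T ≤ exp(β·Z)}) • Z]`. This vanishes because, by the quantile model, the
scalar factor has zero conditional expectation given `Z`.
-/

open MeasureTheory ProbabilityTheory
open scoped Classical

namespace ProbabilityTheory

section Independence

variable {Ω : Type*} {m mΩ : MeasurableSpace Ω} {μ : Measure Ω} [IsFiniteMeasure μ]

lemma condExp_indicator_ae_eq_measureReal_of_indep {m₁ : MeasurableSpace Ω} (hm₁ : m₁ ≤ mΩ)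
    (hm : m ≤ mΩ) (hind : Indep m₁ m μ) {s : Set Ω} (hs : MeasurableSet[m₁] s) :
    μ⟦s | m⟧ =ᵐ[μ] fun _ => μ.real s := by
  have := condExp_indep_eq hm₁ hm (stronglyMeasurable_const (b := (1 : ℝ)) |>.indicator hs) hind
  rwa [integral_indicator_const _ (hm₁ _ hs), smul_eq_mul, mul_one] at this

lemma setIntegral_condExp_indicator_one (hm : m ≤ mΩ) {s w : Set Ω} (hs : MeasurableSet s)
    (hw : MeasurableSet[m] w) : ∫ ω in w, (μ⟦s | m⟧) ω ∂μ = μ.real (s ∩ w) := by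
  rw [setIntegral_condExp hm ((integrable_const 1).indicator hs) hw, setIntegral_indicator hs,
    setIntegral_const, smul_eq_mul, mul_one, Set.inter_comm]

lemma measureReal_inter_inter_eq_mul_of_condExp (hm : m ≤ mΩ) {s t w : Set Ω}
    (hs : MeasurableSet s) (ht : MeasurableSet t) (hw : MeasurableSet[m] w)
    (h : μ⟦s ∩ t | m⟧ =ᵐ[μ] fun ω => (μ⟦s | m⟧) ω * μ.real t) :
    μ.real (s ∩ w ∩ t) = μ.real (s ∩ w) * μ.real t := by
  calc μ.real (s ∩ w ∩ t) = ∫ ω in w, (μ⟦s ∩ t | m⟧) ω ∂μ := by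
        rw [setIntegral_condExp_indicator_one hm (hs.inter ht) hw, Set.inter_right_comm]
    _ = ∫ ω in w, (μ⟦s | m⟧) ω * μ.real t ∂μ := integral_congr_ae (ae_restrict_of_ae h)
    _ = μ.real (s ∩ w) * μ.real t := by
        rw [integral_mul_const, setIntegral_condExp_indicator_one hm hs hw]

theorem indepFun_prodMk_of_condIndepFun [StandardBorelSpace Ω] {β γ δ : Type*}
    [MeasurableSpace β] [MeasurableSpace γ] [MeasurableSpace δ] {X : Ω → β} {Y : Ω → γ}
    {Z : Ω → δ} (hX : Measurable X) (hY : Measurable Y) (hZ : Measurable Z)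
    (hXY : CondIndepFun (MeasurableSpace.comap Z inferInstance) hZ.comap_le X Y μ)
    (hYZ : IndepFun Y Z μ) :
    IndepFun (fun ω => (X ω, Z ω)) Y μ := by
  rw [indepFun_iff_map_prod_eq_prod_map_map (hX.prodMk hZ).aemeasurable hY.aemeasurable]
  refine Measure.ext_prod₃_iff'.mpr fun {s t u} hs ht hu => ?_
  rw [Measure.map_apply (by fun_prop) ((hs.prod ht).prod hu), Measure.prod_prod,
    Measure.map_apply (by fun_prop) (hs.prod ht), Measure.map_apply hY hu]
  have hcond : μ⟦X ⁻¹' s ∩ Y ⁻¹' u | MeasurableSpace.comap Z inferInstance⟧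
      =ᵐ[μ] fun ω => (μ⟦X ⁻¹' s | MeasurableSpace.comap Z inferInstance⟧) ω
        * μ.real (Y ⁻¹' u) := by
    filter_upwards [(condIndepFun_iff_condExp_inter_preimage_eq_mul hX hY).mp hXY s u hs hu,
      condExp_indicator_ae_eq_measureReal_of_indep hY.comap_le hZ.comap_le hYZ ⟨u, hu, rfl⟩]
      with ω h_condIndep h_indep
    rw [h_condIndep, h_indep]
  have := measureReal_inter_inter_eq_mul_of_condExp hZ.comap_le (hX hs) (hY hu) ⟨t, ht, rfl⟩ hcond
  rwa [measureReal_def, measureReal_def, measureReal_def, ← ENNReal.toReal_mul,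
    ENNReal.toReal_eq_toReal_iff' (by finiteness) (by finiteness)] at this

end Independence

section Survival

variable {Ω : Type*} [MeasurableSpace Ω]

noncomputable def survivalFun (μ : Measure Ω) (C : Ω → ℝ) (t : ℝ) : ℝ :=
  μ.real {ω | t ≤ C ω}

variable (μ : Measure Ω) (C : Ω → ℝ)

lemma antitone_survivalFun [IsFiniteMeasure μ] : Antitone (survivalFun μ C) := fun _ _ hst =>
  measureReal_mono fun _ hω => hst.trans hω

lemma measurable_survivalFun [IsFiniteMeasure μ] : Measurable (survivalFun μ C) :=
  (antitone_survivalFun μ C).measurable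

lemma survivalFun_nonneg (t : ℝ) : 0 ≤ survivalFun μ C t := measureReal_nonneg

lemma survivalFun_le_one [IsProbabilityMeasure μ] (t : ℝ) : survivalFun μ C t ≤ 1 :=
  measureReal_le_one

end Survival

section Fubini

variable {Ω β γ E : Type*} {mΩ : MeasurableSpace Ω} [MeasurableSpace β] [MeasurableSpace γ]
  [NormedAddCommGroup E] [NormedSpace ℝ E] {μ : Measure Ω} [IsFiniteMeasure μ]

theorem IndepFun.integral_comp_prodMk {X : Ω → β} {Y : Ω → γ} (hXY : IndepFun X Y μ)
    (hX : Measurable X) (hY : Measurable Y) {F : β × γ → E} (hF : StronglyMeasurable F)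
    (hint : Integrable (fun ω => F (X ω, Y ω)) μ) :
    ∫ ω, F (X ω, Y ω) ∂μ = ∫ ω, ∫ ω', F (X ω, Y ω') ∂μ ∂μ := by
  have hmap := (indepFun_iff_map_prod_eq_prod_map_map hX.aemeasurable hY.aemeasurable).mp hXY
  have hFint : Integrable F ((μ.map X).prod (μ.map Y)) := by
    rwa [← hmap, integrable_map_measure hF.aestronglyMeasurable (hX.prodMk hY).aemeasurable]
  calc ∫ ω, F (X ω, Y ω) ∂μ = ∫ q, F q ∂((μ.map X).prod (μ.map Y)) := by
        rw [← hmap, integral_map (hX.prodMk hY).aemeasurable hF.aestronglyMeasurable]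
    _ = ∫ x, ∫ y, F (x, y) ∂(μ.map Y) ∂(μ.map X) := integral_prod F hFint
    _ = ∫ ω, ∫ ω', F (X ω, Y ω') ∂μ ∂μ := by
        rw [integral_map hX.aemeasurable hF.integral_prod_right'.aestronglyMeasurable]
        congr with x
        exact integral_map hY.aemeasurable
          (hF.comp_measurable measurable_prodMk_left).aestronglyMeasurable

theorem IndepFun.integral_indicator_le_eq_integral_survivalFun_smul [CompleteSpace E]
    {X : Ω → β} {C : Ω → ℝ} (hXC : IndepFun X C μ) (hX : Measurable X) (hC : Measurable C)
    {τ : β → ℝ} (hτ : Measurable τ) {h : β → E} (hh : StronglyMeasurable h)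
    (hint : Integrable ({ω | τ (X ω) ≤ C ω}.indicator fun ω => h (X ω)) μ) :
    ∫ ω, {ω | τ (X ω) ≤ C ω}.indicator (fun ω => h (X ω)) ω ∂μ
      = ∫ ω, survivalFun μ C (τ (X ω)) • h (X ω) ∂μ := by
  have hF : StronglyMeasurable ({q : β × ℝ | τ q.1 ≤ q.2}.indicator fun q => h q.1) :=
    (hh.comp_measurable measurable_fst).indicator
      (measurableSet_le (hτ.comp measurable_fst) measurable_snd)
  refine (hXC.integral_comp_prodMk hX hC hF hint).trans ?_
  congr with ω
  exact integral_indicator_const (h (X ω))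
    (measurableSet_le (f := fun _ => τ (X ω)) measurable_const hC)

end Fubini

lemma integral_smul_eq_zero_of_condExp_ae_eq_zero {Ω E : Type*} {m mΩ : MeasurableSpace Ω}
    [NormedAddCommGroup E] [NormedSpace ℝ E] [CompleteSpace E] {μ : Measure Ω} (hm : m ≤ mΩ)
    [SigmaFinite (μ.trim hm)] {f : Ω → ℝ} {g : Ω → E} (hf : Integrable f μ)
    (hg : StronglyMeasurable[m] g) (hfg : Integrable (fun ω => f ω • g ω) μ)
    (hf0 : μ[f | m] =ᵐ[μ] 0) :
    ∫ ω, f ω • g ω ∂μ = 0 := by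
  change ∫ ω, (f • g) ω ∂μ = 0
  rw [← integral_condExp hm]
  refine (integral_congr_ae ?_).trans (integral_zero Ω E)
  filter_upwards [condExp_smul_of_aestronglyMeasurable_right hf hfg hg.aestronglyMeasurable, hf0]
    with ω h_pullOut h_zero
  rw [h_pullOut, Pi.smul_apply', h_zero, Pi.zero_apply, zero_smul]

end ProbabilityTheory

section CensoredQuantileModel

variable {p : ℕ} (t₀ l : ℝ) (β : Fin p → ℝ)

noncomputable def quantileResidual (t : ℝ) (z : Fin p → ℝ) : ℝ :=
  (if t ≤ t₀ then 1 else 0) * (l - if t₀ - t ≤ Real.exp (∑ i, β i * z i) then 1 else 0)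

/-- `(G t)⁻¹` matters only for `t ≤ t₀`: the residual vanishes beyond `t₀`. -/
noncomputable def ipcwScore (G : ℝ → ℝ) (w : ℝ × (Fin p → ℝ)) : Fin p → ℝ :=
  ((G w.1)⁻¹ * quantileResidual t₀ l β w.1 w.2) • w.2

lemma measurable_quantileResidual : Measurable (Function.uncurry (quantileResidual t₀ l β)) := by
  have hscore : Measurable fun q : ℝ × (Fin p → ℝ) => Real.exp (∑ i, β i * q.2 i) := by fun_prop
  exact (Measurable.ite (measurableSet_le measurable_fst measurable_const) measurable_const
    measurable_const).mul (measurable_const.sub (Measurable.ite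
      (measurableSet_le (measurable_const.sub measurable_fst) hscore) measurable_const
      measurable_const))

lemma measurable_ipcwScore {G : ℝ → ℝ} (hG : Measurable G) : Measurable (ipcwScore t₀ l β G) :=
  ((hG.comp measurable_fst).inv.mul (measurable_quantileResidual t₀ l β)).smul measurable_snd

lemma abs_quantileResidual_le (t : ℝ) (z : Fin p → ℝ) :
    |quantileResidual t₀ l β t z| ≤ |l| + 1 := by
  unfold quantileResidual
  split_ifs <;> simp <;> first | positivity | simpa using abs_sub l 1

lemma norm_quantileResidual_smul_le (t : ℝ) (z : Fin p → ℝ) :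
    ‖quantileResidual t₀ l β t z • z‖ ≤ (|l| + 1) * ‖z‖ := by
  rw [norm_smul, Real.norm_eq_abs]
  exact mul_le_mul_of_nonneg_right (abs_quantileResidual_le t₀ l β t z) (norm_nonneg z)

lemma quantileResidual_eq_zero_of_lt {t : ℝ} (ht : t₀ < t) (z : Fin p → ℝ) :
    quantileResidual t₀ l β t z = 0 := by
  simp [quantileResidual, not_le.mpr ht]

lemma norm_ipcwScore_le {G : ℝ → ℝ} {w : ℝ × (Fin p → ℝ)} (hG : 0 ≤ G w.1) :
    ‖ipcwScore t₀ l β G w‖ ≤ (|l| + 1) * (‖w.2‖ / G w.1) := by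
  rw [ipcwScore, ← smul_smul, norm_smul, norm_inv, Real.norm_of_nonneg hG, mul_div_assoc',
    inv_mul_eq_div]
  exact div_le_div_of_nonneg_right (norm_quantileResidual_smul_le t₀ l β _ _) hG

lemma smul_ipcwScore {G : ℝ → ℝ} (hG : ∀ t ≤ t₀, G t ≠ 0) (w : ℝ × (Fin p → ℝ)) :
    G w.1 • ipcwScore t₀ l β G w = quantileResidual t₀ l β w.1 w.2 • w.2 := by
  rcases le_or_gt w.1 t₀ with hle | hlt
  · rw [ipcwScore, smul_smul, ← mul_assoc, mul_inv_cancel₀ (hG _ hle), one_mul]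
  · simp [ipcwScore, quantileResidual_eq_zero_of_lt t₀ l β hlt]

lemma quantileResidual_comp_eq_indicator {Ω : Type*} (T : Ω → ℝ) (Z : Ω → Fin p → ℝ) :
    (fun ω => quantileResidual t₀ l β (T ω) (Z ω))
      = l • {ω | T ω ≤ t₀}.indicator (fun _ => (1 : ℝ))
        - {ω | t₀ - T ω ≤ Real.exp (∑ i, β i * Z ω i) ∧ T ω ≤ t₀}.indicator (fun _ => 1) := by
  ext ω
  simp only [quantileResidual, Pi.sub_apply, Pi.smul_apply, Set.indicator_apply,
    Set.mem_ofPred_eq, smul_eq_mul]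
  split_ifs <;> simp_all

variable {Ω : Type*} {m mΩ : MeasurableSpace Ω} {μ : Measure Ω} {T : Ω → ℝ} {Z : Ω → Fin p → ℝ}

lemma integrable_quantileResidual [IsFiniteMeasure μ] (hT : Measurable T) (hZ : Measurable Z) :
    Integrable (fun ω => quantileResidual t₀ l β (T ω) (Z ω)) μ :=
  .of_bound ((measurable_quantileResidual t₀ l β).comp (hT.prodMk hZ)).aestronglyMeasurable
    (|l| + 1) (.of_forall fun ω => abs_quantileResidual_le t₀ l β (T ω) (Z ω))

lemma condExp_quantileResidual_ae_eq_zero [IsFiniteMeasure μ]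
    (hT : Measurable T) (hZ : Measurable Z)
    (hmodel : μ[{ω | t₀ - T ω ≤ Real.exp (∑ i, β i * Z ω i) ∧ T ω ≤ t₀}.indicator (fun _ => 1) | m]
      =ᵐ[μ] fun ω => l * μ[{ω | T ω ≤ t₀}.indicator (fun _ => (1 : ℝ)) | m] ω) :
    μ[fun ω => quantileResidual t₀ l β (T ω) (Z ω) | m] =ᵐ[μ] 0 := by
  have hA : MeasurableSet {ω | T ω ≤ t₀} := measurableSet_le hT measurable_const
  have hB : MeasurableSet {ω | t₀ - T ω ≤ Real.exp (∑ i, β i * Z ω i) ∧ T ω ≤ t₀} :=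
    (measurableSet_le (f := fun ω => t₀ - T ω) (by fun_prop) (by fun_prop)).inter hA
  rw [quantileResidual_comp_eq_indicator]
  filter_upwards [condExp_sub (((integrable_const (1 : ℝ)).indicator hA).smul l)
    ((integrable_const (1 : ℝ)).indicator hB) m,
    condExp_smul l ({ω | T ω ≤ t₀}.indicator fun _ => (1 : ℝ)) m, hmodel]
    with ω h_sub h_smul h_model
  rw [h_sub, Pi.sub_apply, h_smul, h_model, Pi.smul_apply, smul_eq_mul, sub_self, Pi.zero_apply]

lemma ipcw_integrand_eq_indicator_ipcwScore {G : ℝ → ℝ} {C Y : Ω → ℝ} {Δ : Ω → Prop}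
    (hY : ∀ ω, Y ω = min (T ω) (C ω)) (hΔ : ∀ ω, Δ ω ↔ T ω ≤ C ω) (ω : Ω) :
    ((if Y ω ≤ t₀ ∧ Δ ω then 1 / G (Y ω) else 0)
        * (l - if t₀ - Y ω ≤ Real.exp (∑ i, β i * Z ω i) then 1 else 0)) • Z ω
      = {ω | T ω ≤ C ω}.indicator (fun ω => ipcwScore t₀ l β G (T ω, Z ω)) ω := by
  by_cases hTC : T ω ≤ C ω
  · simp only [Set.indicator_of_mem (show ω ∈ {ω | T ω ≤ C ω} from hTC), ipcwScore,
      quantileResidual, (hY ω).trans (min_eq_left hTC), (hΔ ω).mpr hTC, and_true]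
    split_ifs <;> simp
  · simp [hΔ ω, hTC]

variable {C Y : Ω → ℝ}

lemma integrable_indicator_ipcwScore [IsFiniteMeasure μ] (hT : Measurable T) (hC : Measurable C)
    (hZ : Measurable Z) (hY : ∀ ω, Y ω = min (T ω) (C ω))
    (hint : Integrable (fun ω => ‖Z ω‖ / survivalFun μ C (Y ω)) μ) :
    Integrable ({ω | T ω ≤ C ω}.indicator fun ω => ipcwScore t₀ l β (survivalFun μ C) (T ω, Z ω))
      μ := by
  refine (hint.const_mul (|l| + 1)).mono' (((measurable_ipcwScore t₀ l β
    (measurable_survivalFun μ C)).comp (hT.prodMk hZ)).indicator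
      (measurableSet_le hT hC)).aestronglyMeasurable (.of_forall fun ω => ?_)
  by_cases hTC : T ω ≤ C ω
  · rw [Set.indicator_of_mem (show ω ∈ {ω | T ω ≤ C ω} from hTC), (hY ω).trans (min_eq_left hTC)]
    exact norm_ipcwScore_le t₀ l β (survivalFun_nonneg μ C _)
  · rw [Set.indicator_of_notMem (show ω ∉ {ω | T ω ≤ C ω} from hTC), norm_zero]
    exact mul_nonneg (by positivity) (div_nonneg (norm_nonneg _) (survivalFun_nonneg μ C _))

lemma integrable_quantileResidual_smul [IsProbabilityMeasure μ] (hT : Measurable T)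
    (hZ : Measurable Z) (hY : ∀ ω, Y ω = min (T ω) (C ω))
    (hpos : ∀ t ≤ t₀, 0 < survivalFun μ C t)
    (hint : Integrable (fun ω => ‖Z ω‖ / survivalFun μ C (Y ω)) μ) :
    Integrable (fun ω => quantileResidual t₀ l β (T ω) (Z ω) • Z ω) μ := by
  refine (hint.const_mul (|l| + 1)).mono' (((measurable_quantileResidual t₀ l β).comp
    (hT.prodMk hZ)).smul hZ).aestronglyMeasurable (.of_forall fun ω => ?_)
  rcases le_or_gt (T ω) t₀ with hle | hlt
  · have hY_le : Y ω ≤ t₀ := (hY ω ▸ min_le_left _ _).trans hle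
    refine (norm_quantileResidual_smul_le t₀ l β _ _).trans
      (mul_le_mul_of_nonneg_left ?_ (by positivity))
    exact le_div_self (norm_nonneg _) (hpos _ hY_le) (survivalFun_le_one μ C _)
  · rw [quantileResidual_eq_zero_of_lt t₀ l β hlt, zero_smul, norm_zero]
    exact mul_nonneg (by positivity) (div_nonneg (norm_nonneg _) (survivalFun_nonneg μ C _))

end CensoredQuantileModel

theorem stmt5_general {Ω : Type*} [MeasurableSpace Ω] [StandardBorelSpace Ω]
    (μ : Measure Ω) [IsProbabilityMeasure μ] {p : ℕ}
    (T C : Ω → ℝ) (Z : Ω → Fin p → ℝ)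
    (hT : Measurable T) (hC : Measurable C) (hZ : Measurable Z)
    (Y : Ω → ℝ) (hY : ∀ ω, Y ω = min (T ω) (C ω))
    (Δ : Ω → Prop) (hΔ : ∀ ω, Δ ω ↔ T ω ≤ C ω)
    (G : ℝ → ℝ) (hG : ∀ t, G t = (μ {ω | t ≤ C ω}).toReal)
    (t₀ : ℝ) (l : ℝ) (β : Fin p → ℝ)
    (hCI : CondIndepFun (MeasurableSpace.comap Z inferInstance) hZ.comap_le T C μ)
    (hCZ : IndepFun C Z μ)
    (hpos : ∀ t ≤ t₀, 0 < G t)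
    (hint : Integrable (fun ω => ‖Z ω‖ / G (Y ω)) μ)
    (hmodel : (μ[Set.indicator {ω' | t₀ - T ω' ≤ Real.exp (∑ i, β i * Z ω' i) ∧ T ω' ≤ t₀}
          (fun _ => (1 : ℝ)) | MeasurableSpace.comap Z inferInstance])
        =ᵐ[μ] fun ω => l * (μ[Set.indicator {ω' | T ω' ≤ t₀} (fun _ => (1 : ℝ)) |
          MeasurableSpace.comap Z inferInstance]) ω) :
    ∫ ω, ((if Y ω ≤ t₀ ∧ Δ ω then 1 / G (Y ω) else 0)
          * (l - if t₀ - Y ω ≤ Real.exp (∑ i, β i * Z ω i) then 1 else 0)) • Z ω ∂μ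
      = 0 := by
  obtain rfl : G = survivalFun μ C := funext hG
  have hTZ_indep_C := indepFun_prodMk_of_condIndepFun hT hC hZ hCI hCZ
  calc _ = ∫ ω, {ω | T ω ≤ C ω}.indicator
          (fun ω => ipcwScore t₀ l β (survivalFun μ C) (T ω, Z ω)) ω ∂μ :=
        integral_congr_ae (.of_forall (ipcw_integrand_eq_indicator_ipcwScore t₀ l β hY hΔ))
    _ = ∫ ω, survivalFun μ C (T ω) • ipcwScore t₀ l β (survivalFun μ C) (T ω, Z ω) ∂μ :=
        hTZ_indep_C.integral_indicator_le_eq_integral_survivalFun_smul (hT.prodMk hZ) hC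
          measurable_fst
          (measurable_ipcwScore t₀ l β (measurable_survivalFun μ C)).stronglyMeasurable
          (integrable_indicator_ipcwScore t₀ l β hT hC hZ hY hint)
    _ = ∫ ω, quantileResidual t₀ l β (T ω) (Z ω) • Z ω ∂μ :=
        integral_congr_ae (.of_forall fun ω =>
          smul_ipcwScore t₀ l β (fun t ht => (hpos t ht).ne') (T ω, Z ω))
    _ = 0 :=
        integral_smul_eq_zero_of_condExp_ae_eq_zero hZ.comap_le
          (integrable_quantileResidual t₀ l β hT hZ) (comap_measurable Z).stronglyMeasurable
          (integrable_quantileResidual_smul t₀ l β hT hZ hY hpos hint)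
          (condExp_quantileResidual_ae_eq_zero t₀ l β hT hZ hmodel)

/-- Combining the IPCW identities: under conditional independence of `T` and
`C` given `Z`, independence of `C` and `Z`, positivity of `G` on `[0,t₀]`, and the
conditional quantile model, the population estimating function vanishes:
`E[ Z · (1{Y ≤ t₀, Δ=1}/G(Y)) · ( λ − 1{t₀ − Y ≤ exp(β'Z)} ) ] = 0`,
where `Y = min(T,C)` and `Δ = 1{T ≤ C}`. -/
theorem stmt5 {Ω : Type*} [MeasurableSpace Ω] [StandardBorelSpace Ω] [Nonempty Ω]
    (μ : Measure Ω) [IsProbabilityMeasure μ] {p : ℕ}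
    (T C : Ω → ℝ) (Z : Ω → Fin p → ℝ)
    (hT : Measurable T) (hC : Measurable C) (hZ : Measurable Z)
    (Y : Ω → ℝ) (hY : ∀ ω, Y ω = min (T ω) (C ω))
    (Δ : Ω → Prop) (hΔ : ∀ ω, Δ ω ↔ T ω ≤ C ω)
    (G : ℝ → ℝ) (hG : ∀ t, G t = (μ {ω | t ≤ C ω}).toReal)
    (t₀ : ℝ) (l : ℝ) (hl : l ∈ Set.Ioo (0 : ℝ) 1) (β : Fin p → ℝ)
    (hCI : CondIndepFun (MeasurableSpace.comap Z inferInstance) hZ.comap_le T C μ)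
    (hCZ : IndepFun C Z μ)
    (hpos : ∀ t ≤ t₀, 0 < G t)
    (hint : Integrable (fun ω => ‖Z ω‖ / G (Y ω)) μ)
    (hmodel : (μ[Set.indicator {ω' | t₀ - T ω' ≤ Real.exp (∑ i, β i * Z ω' i) ∧ T ω' ≤ t₀}
          (fun _ => (1 : ℝ)) | MeasurableSpace.comap Z inferInstance])
        =ᵐ[μ] fun ω => l * (μ[Set.indicator {ω' | T ω' ≤ t₀} (fun _ => (1 : ℝ)) |
          MeasurableSpace.comap Z inferInstance]) ω) :
    ∫ ω, ((if Y ω ≤ t₀ ∧ Δ ω then 1 / G (Y ω) else 0)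
          * (l - if t₀ - Y ω ≤ Real.exp (∑ i, β i * Z ω i) then 1 else 0)) • Z ω ∂μ
      = 0 :=
  stmt5_general μ T C Z hT hC hZ Y hY Δ hΔ G hG t₀ l β hCI hCZ hpos hint hmodel
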